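/- Let ℓ be a prime number and n ≥ 0 an integer. The subset of Kⁿ corresponding, via coefficients, to the monic polynomials of degree n over K all of whose roots in K are roots of unity, is a closed subset of Kⁿ and is discrete in the subspace topology. -/

import Mathlib

/-!
Distinct roots of unity `ζ₁ ≠ ζ₂` in `K` satisfy `‖ℓ‖ ≤ ‖ζ₁ - ζ₂‖`. Reducing to `ζ = ζ₁ / ζ₂`,
some power `ξ` of `ζ` has prime order `p`; summing `1 - ξ ^ i` over `i < p` gives
`‖p‖ ≤ ‖ξ - 1‖ ≤ ‖ζ - 1‖`, and `‖p‖ ≥ ‖ℓ‖` because `p = ℓ` or `p` is coprime to `ℓ`, hence of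
norm `1`.

Now let `f ≠ g` be monic of degree `n` with only roots of unity as roots, and let `x` be a root
of multiplicities `a < b` in `f`, `g`. At `y = x + ℓ ^ (n + 2)` every other root contributes a
factor of norm between `‖ℓ‖` and `1`, so `‖g(y)‖ ≤ ‖ℓ‖ ^ ((n + 2)(a + 1)) < ‖f(y)‖`, and then
`‖f(y) - g(y)‖ = ‖f(y)‖ ≥ ε := ‖ℓ‖ ^ ((n + 2) n + n)`. As `‖y‖ ≤ 1`, the coefficient vectors of
`f` and `g` are at distance at least `ε`. A uniformly separated set is closed and discrete.
-/

open Polynomial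

section MonicOfCoeffs

variable {R : Type*} {n : ℕ}

noncomputable def monicOfCoeffs [Semiring R] (co : Fin n → R) : R[X] :=
  X ^ n + ∑ i : Fin n, C (co i) * X ^ (i : ℕ)

section Semiring

variable [Semiring R]

lemma monicOfCoeffs_monic (co : Fin n → R) : (monicOfCoeffs co).Monic :=
  monic_X_pow_add (degree_sum_fin_lt co)

lemma natDegree_monicOfCoeffs_le (co : Fin n → R) : (monicOfCoeffs co).natDegree ≤ n :=
  natDegree_add_le_of_degree_le (natDegree_X_pow_le n)
    (natDegree_le_iff_degree_le.2 (degree_sum_fin_lt co).le)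

lemma coeff_monicOfCoeffs (co : Fin n → R) (i : Fin n) : (monicOfCoeffs co).coeff i = co i := by
  simp [monicOfCoeffs, coeff_C_mul, coeff_X_pow, Fin.val_inj, i.isLt.ne]

lemma monicOfCoeffs_injective : Function.Injective (monicOfCoeffs : (Fin n → R) → R[X]) :=
  fun p q h => funext fun i => by rw [← coeff_monicOfCoeffs p, h, coeff_monicOfCoeffs]

end Semiring

lemma eval_monicOfCoeffs_sub_eval [CommRing R] (p q : Fin n → R) (y : R) :
    (monicOfCoeffs p).eval y - (monicOfCoeffs q).eval y =
      ∑ i : Fin n, (p i - q i) * y ^ (i : ℕ) := by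
  simp [monicOfCoeffs, eval_finsetSum, sub_mul, Finset.sum_sub_distrib]

end MonicOfCoeffs

section Ultrametric

variable {K : Type*} [NormedField K] [IsUltrametricDist K]

lemma norm_pow_sub_one_le_norm_sub_one {ζ : K} (hζ : ‖ζ‖ ≤ 1) (r : ℕ) :
    ‖ζ ^ r - 1‖ ≤ ‖ζ - 1‖ := by
  rw [← geom_sum_mul, norm_mul]
  refine mul_le_of_le_one_left (norm_nonneg _) ?_
  refine IsUltrametricDist.norm_sum_le_of_forall_le_of_nonneg zero_le_one fun i _ => ?_
  rw [norm_pow]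
  exact pow_le_one₀ (norm_nonneg _) hζ

lemma norm_natCast_le_norm_sub_one {ζ : K} {m : ℕ} (hm : 0 < m) (hζm : ζ ^ m = 1)
    (hζ : ζ ≠ 1) : ‖(m : K)‖ ≤ ‖ζ - 1‖ := by
  have hgeom : ∑ i ∈ Finset.range m, ζ ^ i = 0 := by
    have h := geom_sum_mul ζ m
    rw [hζm, sub_self] at h
    exact (mul_eq_zero.1 h).resolve_right (sub_ne_zero.2 hζ)
  have hm_eq : (m : K) = ∑ i ∈ Finset.range m, -(ζ ^ i - 1) := by
    simp [Finset.sum_sub_distrib, hgeom]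
  have hζ1 : ‖ζ‖ ≤ 1 := (isOfFinOrder_iff_pow_eq_one.2 ⟨m, hm, hζm⟩).norm_eq_one.le
  rw [hm_eq]
  refine IsUltrametricDist.norm_sum_le_of_forall_le_of_nonneg (norm_nonneg _) fun i _ => ?_
  rw [norm_neg]
  exact norm_pow_sub_one_le_norm_sub_one hζ1 i

variable {ℓ : ℕ}

lemma norm_natCast_eq_one_of_coprime (hℓ1 : ‖(ℓ : K)‖ < 1) {k : ℕ} (hk : ℓ.Coprime k) :
    ‖(k : K)‖ = 1 := by
  obtain ⟨a, b, hab⟩ := Nat.isCoprime_iff_coprime.2 hk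
  refine le_antisymm (IsUltrametricDist.norm_natCast_le_one K k) (not_lt.1 fun hk1 => ?_)
  have h1 : (1 : K) = a * ℓ + b * k := by exact_mod_cast congrArg (Int.cast : ℤ → K) hab.symm
  have h := IsUltrametricDist.norm_add_le_max ((a : K) * ℓ) (b * k)
  rw [← h1, norm_one, norm_mul, norm_mul] at h
  have ha := mul_lt_one_of_nonneg_of_lt_one_right (IsUltrametricDist.norm_intCast_le_one K a)
    (norm_nonneg _) hℓ1
  have hb := mul_lt_one_of_nonneg_of_lt_one_right (IsUltrametricDist.norm_intCast_le_one K b)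
    (norm_nonneg _) hk1
  exact (max_lt ha hb).not_ge h

lemma norm_natCast_le_norm_natCast_of_prime (hℓ : ℓ.Prime) (hℓ1 : ‖(ℓ : K)‖ < 1) {p : ℕ}
    (hp : p.Prime) : ‖(ℓ : K)‖ ≤ ‖(p : K)‖ := by
  rcases eq_or_ne ℓ p with rfl | hne
  · rfl
  · rw [norm_natCast_eq_one_of_coprime hℓ1 ((Nat.coprime_primes hℓ hp).2 hne)]
    exact hℓ1.le

lemma norm_natCast_le_norm_sub_one_of_isOfFinOrder (hℓ : ℓ.Prime) (hℓ1 : ‖(ℓ : K)‖ < 1)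
    {ζ : K} (hζ : IsOfFinOrder ζ) (hζ1 : ζ ≠ 1) : ‖(ℓ : K)‖ ≤ ‖ζ - 1‖ := by
  have hd : 1 < orderOf ζ := by
    refine lt_of_le_of_ne (orderOf_pos_iff.2 hζ) fun h => hζ1 ?_
    exact orderOf_eq_one_iff.1 h.symm
  set p := (orderOf ζ).minFac
  have hp : p.Prime := Nat.minFac_prime hd.ne'
  obtain ⟨e, he⟩ : p ∣ orderOf ζ := Nat.minFac_dvd _
  have he0 : e ≠ 0 := by rintro rfl; omega
  have hed : e < orderOf ζ := by
    rw [he]; exact lt_mul_left (Nat.pos_of_ne_zero he0) hp.one_lt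
  calc ‖(ℓ : K)‖ ≤ ‖(p : K)‖ := norm_natCast_le_norm_natCast_of_prime hℓ hℓ1 hp
    _ ≤ ‖ζ ^ e - 1‖ := by
      refine norm_natCast_le_norm_sub_one hp.pos ?_ (pow_ne_one_of_lt_orderOf he0 hed)
      rw [← pow_mul, mul_comm, ← he, pow_orderOf_eq_one]
    _ ≤ ‖ζ - 1‖ := norm_pow_sub_one_le_norm_sub_one hζ.norm_eq_one.le e

lemma norm_natCast_le_norm_sub_of_isOfFinOrder (hℓ : ℓ.Prime) (hℓ1 : ‖(ℓ : K)‖ < 1)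
    {ζ₁ ζ₂ : K} (h₁ : IsOfFinOrder ζ₁) (h₂ : IsOfFinOrder ζ₂) (hne : ζ₁ ≠ ζ₂) :
    ‖(ℓ : K)‖ ≤ ‖ζ₁ - ζ₂‖ := by
  have hζ₂ : ζ₂ ≠ 0 := norm_ne_zero_iff.1 (by rw [h₂.norm_eq_one]; exact one_ne_zero)
  have h₂inv : IsOfFinOrder ζ₂⁻¹ := by
    obtain ⟨m, hm, hζm⟩ := isOfFinOrder_iff_pow_eq_one.1 h₂
    exact isOfFinOrder_iff_pow_eq_one.2 ⟨m, hm, by rw [inv_pow, hζm, inv_one]⟩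
  have hsub : ζ₁ - ζ₂ = ζ₂ * (ζ₁ * ζ₂⁻¹ - 1) := by field_simp
  rw [hsub, norm_mul, h₂.norm_eq_one, one_mul]
  exact norm_natCast_le_norm_sub_one_of_isOfFinOrder hℓ hℓ1 (h₁.mul h₂inv)
    ((mul_inv_eq_one₀ hζ₂).not.2 hne)

lemma norm_prod_map_add_sub_bounds [DecidableEq K] (hℓ : ℓ.Prime) (hℓ1 : ‖(ℓ : K)‖ < 1)
    {x t : K} (hx : IsOfFinOrder x) (ht : ‖t‖ < ‖(ℓ : K)‖) (R : Multiset K)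
    (hR : ∀ r ∈ R, IsOfFinOrder r) :
    ‖t‖ ^ R.count x * ‖(ℓ : K)‖ ^ Multiset.card R ≤ ‖(R.map (x + t - ·)).prod‖ ∧
      ‖(R.map (x + t - ·)).prod‖ ≤ ‖t‖ ^ R.count x := by
  induction R using Multiset.induction_on with
  | empty => simp
  | cons a R ih =>
    obtain ⟨ihl, ihu⟩ := ih fun r hr => hR r (Multiset.mem_cons_of_mem hr)
    rw [Multiset.map_cons, Multiset.prod_cons, norm_mul, Multiset.card_cons, pow_succ]
    rcases eq_or_ne a x with rfl | hax
    · rw [Multiset.count_cons_self, pow_succ, add_sub_cancel_left]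
      constructor
      · calc ‖t‖ ^ R.count a * ‖t‖ * (‖(ℓ : K)‖ ^ Multiset.card R * ‖(ℓ : K)‖)
            = ‖t‖ * (‖t‖ ^ R.count a * ‖(ℓ : K)‖ ^ Multiset.card R) * ‖(ℓ : K)‖ := by ring
          _ ≤ ‖t‖ * ‖(R.map (a + t - ·)).prod‖ * 1 := by gcongr
          _ = ‖t‖ * ‖(R.map (a + t - ·)).prod‖ := mul_one _
      · rw [mul_comm (‖t‖ ^ _)]
        gcongr
    · have hr := hR a (Multiset.mem_cons_self a R)
      have hsep := norm_natCast_le_norm_sub_of_isOfFinOrder hℓ hℓ1 hx hr hax.symm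
      have hdist : ‖x + t - a‖ = ‖x - a‖ := by
        rw [add_sub_right_comm, IsUltrametricDist.norm_add_eq_max_of_norm_ne_norm
          (ht.trans_le hsep).ne', max_eq_left (ht.trans_le hsep).le]
      have hle : ‖x - a‖ ≤ 1 := by
        simpa [sub_eq_add_neg, hx.norm_eq_one, hr.norm_eq_one] using
          IsUltrametricDist.norm_add_le_max x (-a)
      have hP := norm_nonneg (R.map (x + t - ·)).prod
      rw [Multiset.count_cons_of_ne hax.symm, hdist]
      constructor
      · rw [mul_comm ‖x - a‖]
        nlinarith [norm_nonneg (ℓ : K)]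
      · nlinarith

lemma le_norm_prod_map_add_sub_sub_prod [DecidableEq K] (hℓ : ℓ.Prime) (hℓ1 : ‖(ℓ : K)‖ < 1)
    {x t : K} (hx : IsOfFinOrder x) (ht0 : t ≠ 0) {n : ℕ} (ht : ‖t‖ < ‖(ℓ : K)‖ ^ (n + 1))
    {R₁ R₂ : Multiset K} (h₁ : ∀ r ∈ R₁, IsOfFinOrder r)
    (h₂ : ∀ r ∈ R₂, IsOfFinOrder r) (hcard : Multiset.card R₁ ≤ n)
    (hlt : R₁.count x < R₂.count x) :
    ‖t‖ ^ n * ‖(ℓ : K)‖ ^ n ≤ ‖(R₁.map (x + t - ·)).prod - (R₂.map (x + t - ·)).prod‖ := by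
  set P₁ := (R₁.map (x + t - ·)).prod
  set P₂ := (R₂.map (x + t - ·)).prod
  have hℓle : ‖(ℓ : K)‖ ≤ 1 := IsUltrametricDist.norm_natCast_le_one K ℓ
  have htℓ : ‖t‖ < ‖(ℓ : K)‖ := ht.trans_le (pow_le_of_le_one (norm_nonneg _) hℓle n.succ_ne_zero)
  have ht1 : ‖t‖ ≤ 1 := htℓ.le.trans hℓle
  have hcount : R₁.count x ≤ n := (Multiset.count_le_card x R₁).trans hcard
  have hP₁ : ‖t‖ ^ R₁.count x * ‖(ℓ : K)‖ ^ n ≤ ‖P₁‖ := by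
    refine le_trans ?_ (norm_prod_map_add_sub_bounds hℓ hℓ1 hx htℓ R₁ h₁).1
    gcongr ‖t‖ ^ _ * ?_
    exact pow_le_pow_of_le_one (norm_nonneg _) hℓle hcard
  have hP₂ : ‖P₂‖ < ‖P₁‖ :=
    calc ‖P₂‖ ≤ ‖t‖ ^ R₂.count x := (norm_prod_map_add_sub_bounds hℓ hℓ1 hx htℓ R₂ h₂).2
      _ ≤ ‖t‖ ^ (R₁.count x + 1) := pow_le_pow_of_le_one (norm_nonneg _) ht1 hlt
      _ < ‖t‖ ^ R₁.count x * ‖(ℓ : K)‖ ^ n := by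
        rw [pow_succ]
        have : 0 < ‖t‖ := norm_pos_iff.2 ht0
        gcongr
        exact ht.trans_le (pow_le_pow_of_le_one (norm_nonneg _) hℓle n.le_succ)
      _ ≤ ‖P₁‖ := hP₁
  calc ‖t‖ ^ n * ‖(ℓ : K)‖ ^ n ≤ ‖t‖ ^ R₁.count x * ‖(ℓ : K)‖ ^ n := by
        gcongr ?_ * _
        exact pow_le_pow_of_le_one (norm_nonneg _) ht1 hcount
    _ ≤ ‖P₁‖ := hP₁
    _ = ‖P₁ - P₂‖ := by
      rw [sub_eq_add_neg,
        IsUltrametricDist.norm_add_eq_max_of_norm_ne_norm (by simpa using hP₂.ne'), norm_neg,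
        max_eq_left hP₂.le]

lemma exists_le_norm_eval_sub_eval [IsAlgClosed K] (hℓ : ℓ.Prime)
    (hℓ0 : (ℓ : K) ≠ 0) (hℓ1 : ‖(ℓ : K)‖ < 1) {n : ℕ} {f g : K[X]} (hf : f.Monic) (hg : g.Monic)
    (hfn : f.natDegree ≤ n) (hgn : g.natDegree ≤ n) (hfr : ∀ x ∈ f.roots, IsOfFinOrder x)
    (hgr : ∀ x ∈ g.roots, IsOfFinOrder x) (hfg : f ≠ g) :
    ∃ y : K, ‖y‖ ≤ 1 ∧
      (‖(ℓ : K)‖ ^ (n + 2)) ^ n * ‖(ℓ : K)‖ ^ n ≤ ‖f.eval y - g.eval y‖ := by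
  classical
  obtain ⟨x, hx⟩ : ∃ x, f.roots.count x ≠ g.roots.count x := by
    by_contra! h
    exact hfg (by rw [(IsAlgClosed.splits f).eq_prod_roots_of_monic hf,
      (IsAlgClosed.splits g).eq_prod_roots_of_monic hg, Multiset.ext.2 h])
  wlog hlt : f.roots.count x < g.roots.count x generalizing f g
  · obtain ⟨y, hy, hle⟩ := this hg hf hgn hfn hgr hfr hfg.symm hx.symm (by omega)
    exact ⟨y, hy, by rwa [norm_sub_rev]⟩
  have hxr : IsOfFinOrder x := hgr x (Multiset.count_pos.1 (by omega))
  set t : K := (ℓ : K) ^ (n + 2)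
  have hℓpos : 0 < ‖(ℓ : K)‖ := norm_pos_iff.2 hℓ0
  have ht : ‖t‖ < ‖(ℓ : K)‖ ^ (n + 1) := by
    rw [norm_pow]; exact pow_lt_pow_right_of_lt_one₀ hℓpos hℓ1 (by omega)
  refine ⟨x + t, ?_, ?_⟩
  · refine (IsUltrametricDist.norm_add_le_max x t).trans (max_le hxr.norm_eq_one.le ?_)
    exact ht.le.trans (pow_le_one₀ hℓpos.le hℓ1.le)
  · rw [(IsAlgClosed.splits f).eval_eq_prod_roots_of_monic hf,
      (IsAlgClosed.splits g).eval_eq_prod_roots_of_monic hg, ← norm_pow]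
    exact le_norm_prod_map_add_sub_sub_prod hℓ hℓ1 hxr (pow_ne_zero _ hℓ0) ht hfr hgr
      ((card_roots' f).trans hfn) hlt

lemma norm_eval_monicOfCoeffs_sub_eval_le {n : ℕ} (p q : Fin n → K) {y : K} (hy : ‖y‖ ≤ 1) :
    ‖(monicOfCoeffs p).eval y - (monicOfCoeffs q).eval y‖ ≤ dist p q := by
  rw [eval_monicOfCoeffs_sub_eval]
  refine IsUltrametricDist.norm_sum_le_of_forall_le_of_nonneg dist_nonneg fun i _ => ?_
  rw [norm_mul, norm_pow, ← dist_eq_norm]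
  calc dist (p i) (q i) * ‖y‖ ^ (i : ℕ) ≤ dist (p i) (q i) :=
        mul_le_of_le_one_right dist_nonneg (pow_le_one₀ (norm_nonneg _) hy)
    _ ≤ dist p q := dist_le_pi_dist p q i

lemma le_dist_of_roots_isOfFinOrder [IsAlgClosed K] (hℓ : ℓ.Prime) (hℓ0 : (ℓ : K) ≠ 0)
    (hℓ1 : ‖(ℓ : K)‖ < 1) {n : ℕ} {p q : Fin n → K}
    (hp : ∀ x ∈ (monicOfCoeffs p).roots, IsOfFinOrder x)
    (hq : ∀ x ∈ (monicOfCoeffs q).roots, IsOfFinOrder x) (hpq : p ≠ q) :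
    (‖(ℓ : K)‖ ^ (n + 2)) ^ n * ‖(ℓ : K)‖ ^ n ≤ dist p q := by
  obtain ⟨y, hy, hle⟩ := exists_le_norm_eval_sub_eval hℓ hℓ0 hℓ1 (monicOfCoeffs_monic p)
    (monicOfCoeffs_monic q) (natDegree_monicOfCoeffs_le p) (natDegree_monicOfCoeffs_le q) hp hq
    (monicOfCoeffs_injective.ne hpq)
  exact hle.trans (norm_eval_monicOfCoeffs_sub_eval_le p q hy)

end Ultrametric

open Polynomial in
/-- Let `ℓ` be a prime and `K` an algebraically closed normed field with
nonarchimedean norm satisfying `‖(ℓ : K)‖ = (ℓ : ℝ)⁻¹`. Identify a monic polynomial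
`X^n + c_{n-1} X^{n-1} + ⋯ + c₀` of degree `n` over `K` with the point
`(c₀, …, c_{n-1}) ∈ Kⁿ`. The subset of `Kⁿ` corresponding to the monic polynomials of
degree `n` all of whose roots in `K` are roots of unity is closed and discrete. -/
theorem stmt3 (ℓ : ℕ) (hℓprime : ℓ.Prime)
    (K : Type*) [NormedField K] [IsAlgClosed K]
    (hna : IsNonarchimedean (fun x : K => ‖x‖))
    (hnorm : ‖(ℓ : K)‖ = (ℓ : ℝ)⁻¹)
    (n : ℕ)
    (S : Set (Fin n → K))
    (hS : S = {co : Fin n → K |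
      ∀ x : K, (X ^ n + ∑ i : Fin n, C (co i) * X ^ (i : ℕ)).IsRoot x →
        ∃ m : ℕ, 1 ≤ m ∧ x ^ m = 1}) :
    IsClosed S ∧ DiscreteTopology S := by
  have : IsUltrametricDist K := IsUltrametricDist.isUltrametricDist_of_isNonarchimedean_norm hna
  have hℓ0 : (ℓ : K) ≠ 0 := norm_ne_zero_iff.1 <| by
    rw [hnorm]
    exact inv_ne_zero (Nat.cast_ne_zero.2 hℓprime.ne_zero)
  have hℓ1 : ‖(ℓ : K)‖ < 1 := by
    rw [hnorm]
    exact inv_lt_one_of_one_lt₀ (by exact_mod_cast hℓprime.one_lt)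
  have hroots : ∀ co ∈ S, ∀ x ∈ (monicOfCoeffs co).roots, IsOfFinOrder x := by
    subst hS
    exact fun co hco x hx => isOfFinOrder_iff_pow_eq_one.2 (hco x (isRoot_of_mem_roots hx))
  have hε : 0 < (‖(ℓ : K)‖ ^ (n + 2)) ^ n * ‖(ℓ : K)‖ ^ n := by
    have := norm_pos_iff.2 hℓ0
    positivity
  have hsep : S.Pairwise fun p q => (‖(ℓ : K)‖ ^ (n + 2)) ^ n * ‖(ℓ : K)‖ ^ n ≤ dist p q :=
    fun p hp q hq hpq =>
      le_dist_of_roots_isOfFinOrder hℓprime hℓ0 hℓ1 (hroots p hp) (hroots q hq) hpq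
  exact ⟨Metric.isClosed_of_pairwise_le_dist hε hsep, DiscreteTopology.of_forall_le_dist hε
    fun a b hab => hsep a.2 b.2 (Subtype.coe_injective.ne hab)⟩
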